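/- The function W, defined on (ℂ₊ ∪ ℝ) \ {−√2, 0, √2} by W(z) = (1/2)·Log(1 + 2/(z² − 2)) if z ∉ (0, √2) and W(z) = (1/2)·ln|1 + 2/(z² − 2)| − iπ/2 if z ∈ (0, √2), is continuous on its domain and analytic (holomorphic) on the open upper half-plane ℂ₊; it extends the real function x ↦ (1/2)·ln(1 + 2/(x² − 2)) defined for real |x| > √2. -/

import Mathlib

/-- The function `W` from the paper, extended arbitrarily off its natural domain. -/
noncomputable def Wfun (z : ℂ) : ℂ :=
  if z.im = 0 ∧ 0 < z.re ∧ z.re < Real.sqrt 2 then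
    ((Real.log ‖1 + 2 / (z ^ 2 - 2)‖ / 2 : ℝ) : ℂ)
      - Complex.I * (Real.pi : ℂ) / 2
  else Complex.log (1 + 2 / (z ^ 2 - 2)) / 2

/-- The natural domain `(ℂ₊ ∪ ℝ) \ {−√2, 0, √2}` of `W`. -/
noncomputable def Wdom : Set ℂ :=
  {z : ℂ | (0 < z.im ∨ z.im = 0) ∧ z ≠ (-(Real.sqrt 2) : ℝ) ∧ z ≠ 0 ∧ z ≠ (Real.sqrt 2 : ℝ)}

/-!
Write `f z = 1 + 2 / (z² - 2)`, so that `Im (f z) = -4 Re z Im z / |z² - 2|²`. Hence `f` maps the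
open upper half-plane into the slit plane, where `Log` is holomorphic, and maps the points of the
closed upper half-plane with `Re z < 0` (resp. `Re z > 0`) into the closed upper (resp. lower)
half-plane. On `(-√2, 0)` the value `f x` is negative and `Log` is continuous there from the closed
upper half-plane. On `(0, √2)` the prescribed value `½ ln |f| - iπ/2` equals `-½ Log (f⁻¹)`, which
also agrees with `W` above that segment, where `f⁻¹` lies in the closed upper half-plane.
-/

open Complex Filter Topology

lemma sq_sub_two_ne_zero {z : ℂ} (hm : z ≠ ((-(Real.sqrt 2) : ℝ) : ℂ))
    (hp : z ≠ ((Real.sqrt 2 : ℝ) : ℂ)) : z ^ 2 - 2 ≠ 0 := by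
  have hsq : ((Real.sqrt 2 : ℝ) : ℂ) ^ 2 = 2 := by norm_cast; exact Real.sq_sqrt zero_le_two
  rw [sub_ne_zero, ← hsq, Ne, sq_eq_sq_iff_eq_or_eq_neg]
  push_cast at hm
  tauto

lemma sq_sub_two_ne_zero_of_im_pos {z : ℂ} (hz : 0 < z.im) : z ^ 2 - 2 ≠ 0 :=
  sq_sub_two_ne_zero (fun h => by simp [h] at hz) (fun h => by simp [h] at hz)

lemma im_one_add_two_div_sq_sub_two (z : ℂ) :
    (1 + 2 / (z ^ 2 - 2)).im = -(4 * z.re * z.im) / normSq (z ^ 2 - 2) := by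
  simp only [add_im, one_im, div_im, sub_re, sub_im, pow_two, mul_re, mul_im, normSq_apply,
    re_ofNat, im_ofNat]
  ring

lemma one_add_two_div_sq_sub_two_mem_slitPlane {z : ℂ} (hz : 0 < z.im) :
    1 + 2 / (z ^ 2 - 2) ∈ slitPlane := by
  rw [mem_slitPlane_iff]
  by_cases hre : z.re = 0
  · left
    have hre' : (z ^ 2 - 2).re = -(z.im ^ 2 + 2) := by
      simp only [pow_two, sub_re, mul_re, hre, mul_zero, zero_sub, re_ofNat]; ring
    have him' : (z ^ 2 - 2).im = 0 := by simp [pow_two, hre]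
    simp only [add_re, one_re, div_re, re_ofNat, im_ofNat, hre', him', normSq_apply]
    have : 0 < z.im ^ 2 + 2 := by positivity
    field_simp
    nlinarith
  · right
    rw [im_one_add_two_div_sq_sub_two]
    have hnormSq := normSq_pos.mpr (sq_sub_two_ne_zero_of_im_pos hz)
    exact div_ne_zero (by simp [hre, hz.ne']) hnormSq.ne'

lemma one_add_two_div_sq_sub_two_ofReal (x : ℝ) :
    1 + 2 / ((x : ℂ) ^ 2 - 2) = ((1 + 2 / (x ^ 2 - 2) : ℝ) : ℂ) := by
  push_cast; ring

lemma one_add_two_div_sq_sub_two_pos {x : ℝ} (h : 2 < x ^ 2) : 0 < 1 + 2 / (x ^ 2 - 2) := by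
  have : 0 < x ^ 2 - 2 := by linarith
  positivity

lemma one_add_two_div_sq_sub_two_neg {x : ℝ} (h0 : x ≠ 0) (h2 : x ^ 2 < 2) :
    1 + 2 / (x ^ 2 - 2) < 0 := by
  have hx : 0 < x ^ 2 := by positivity
  rw [one_add_div (by linarith), sub_add_cancel]
  exact div_neg_of_pos_of_neg hx (by linarith)

lemma continuousWithinAt_clog_of_im_nonneg {g : ℂ → ℂ} {s : Set ℂ} {z : ℂ}
    (hg : ContinuousAt g z) (hre : (g z).re < 0) (him : (g z).im = 0)
    (hs : ∀ w ∈ s, 0 ≤ (g w).im) : ContinuousWithinAt (fun w => log (g w)) s z :=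
  (continuousWithinAt_log_of_re_neg_of_im_zero hre him).comp hg.continuousWithinAt hs

lemma Wfun_eq_log {w : ℂ} (h : ¬(w.im = 0 ∧ 0 < w.re ∧ w.re < Real.sqrt 2)) :
    Wfun w = log (1 + 2 / (w ^ 2 - 2)) / 2 :=
  if_neg h

lemma Wfun_eq_neg_log_inv {w : ℂ} (him : 0 < w.im ∨ w.im = 0) (h0 : 0 < w.re)
    (h2 : w.re < Real.sqrt 2) : Wfun w = -log (1 + 2 / (w ^ 2 - 2))⁻¹ / 2 := by
  rcases him with him | him
  · have hneg : (1 + 2 / (w ^ 2 - 2)).im < 0 := by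
      rw [im_one_add_two_div_sq_sub_two]
      exact div_neg_of_neg_of_pos (by nlinarith)
        (normSq_pos.mpr (sq_sub_two_ne_zero_of_im_pos him))
    rw [Wfun_eq_log (fun h => him.ne' h.1), log_inv _ (fun h => hneg.ne (arg_eq_pi_iff.mp h).2)]
    ring
  · obtain ⟨x, rfl⟩ : ∃ x : ℝ, w = x := ⟨w.re, Complex.ext rfl him⟩
    simp only [ofReal_re] at h0 h2
    have hneg := one_add_two_div_sq_sub_two_neg h0.ne' ((Real.lt_sqrt h0.le).mp h2)
    have harg : arg (1 + 2 / ((x : ℂ) ^ 2 - 2)) = Real.pi := by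
      rw [one_add_two_div_sq_sub_two_ofReal, arg_ofReal_of_neg hneg]
    rw [Wfun, if_pos ⟨ofReal_im x, h0, h2⟩, log_inv_eq_ite, if_pos harg]
    apply Complex.ext <;> simp [log_re, log_im, harg, neg_div]

theorem differentiableOn_Wfun : DifferentiableOn ℂ Wfun {z : ℂ | 0 < z.im} := by
  intro z hz
  have hne := sq_sub_two_ne_zero_of_im_pos hz
  have hf : DifferentiableAt ℂ (fun w : ℂ => 1 + 2 / (w ^ 2 - 2)) z := by
    fun_prop (disch := exact hne)
  have hlog := (hf.clog (one_add_two_div_sq_sub_two_mem_slitPlane hz)).div_const 2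
  exact hlog.differentiableWithinAt.congr (fun w hw => Wfun_eq_log fun h => hw.ne' h.1)
    (Wfun_eq_log fun h => hz.ne' h.1)

theorem continuousAt_Wfun_ofReal_of_two_lt_sq {x : ℝ} (hx : 2 < x ^ 2) :
    ContinuousAt Wfun x := by
  have hne : (x : ℂ) ^ 2 - 2 ≠ 0 := by exact_mod_cast (sub_pos.mpr hx).ne'
  have hslit : 1 + 2 / ((x : ℂ) ^ 2 - 2) ∈ slitPlane := by
    rw [one_add_two_div_sq_sub_two_ofReal]
    exact ofReal_mem_slitPlane.mpr (one_add_two_div_sq_sub_two_pos hx)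
  have hf : ContinuousAt (fun w : ℂ => 1 + 2 / (w ^ 2 - 2)) x := by fun_prop (disch := exact hne)
  have hnear : {w : ℂ | 2 < w.re ^ 2} ∈ 𝓝 (x : ℂ) :=
    (isOpen_lt continuous_const (continuous_re.pow 2)).mem_nhds hx
  refine ((hf.clog hslit).div_const 2).congr (eventually_of_mem hnear fun w hw => ?_)
  refine (Wfun_eq_log fun h => (show 2 < w.re ^ 2 from hw).not_gt ?_).symm
  exact (Real.lt_sqrt h.2.1.le).mp h.2.2

theorem continuousWithinAt_Wfun_ofReal_of_neg {x : ℝ} (h0 : x < 0) (h2 : x ^ 2 < 2) :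
    ContinuousWithinAt Wfun Wdom x := by
  have hne : (x : ℂ) ^ 2 - 2 ≠ 0 := by exact_mod_cast (sub_neg.mpr h2).ne
  have hval := one_add_two_div_sq_sub_two_ofReal x
  have hlog : ContinuousWithinAt (fun w : ℂ => log (1 + 2 / (w ^ 2 - 2)))
      (Wdom ∩ {w | w.re < 0}) x := by
    refine continuousWithinAt_clog_of_im_nonneg (by fun_prop (disch := exact hne))
      (by rw [hval, ofReal_re]; exact one_add_two_div_sq_sub_two_neg h0.ne h2)
      (by rw [hval, ofReal_im]) fun w ⟨⟨him, _⟩, hre⟩ => ?_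
    rw [im_one_add_two_div_sq_sub_two]
    refine div_nonneg ?_ (normSq_nonneg _)
    rcases him with him | him <;> nlinarith [show w.re < 0 from hre]
  have hnear : {w : ℂ | w.re < 0} ∈ 𝓝 (x : ℂ) :=
    (isOpen_lt continuous_re continuous_const).mem_nhds h0
  exact (continuousWithinAt_inter hnear).mp <| (hlog.div_const 2).congr
    (fun w hw => Wfun_eq_log fun h => lt_asymm h.2.1 hw.2) (Wfun_eq_log fun h => lt_asymm h.2.1 h0)

theorem continuousWithinAt_Wfun_ofReal_of_pos {x : ℝ} (h0 : 0 < x) (h2 : x ^ 2 < 2) :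
    ContinuousWithinAt Wfun Wdom x := by
  have hne : (x : ℂ) ^ 2 - 2 ≠ 0 := by exact_mod_cast (sub_neg.mpr h2).ne
  have hneg := one_add_two_div_sq_sub_two_neg h0.ne' h2
  have hval : (1 + 2 / ((x : ℂ) ^ 2 - 2))⁻¹ = (((1 + 2 / (x ^ 2 - 2))⁻¹ : ℝ) : ℂ) := by
    rw [one_add_two_div_sq_sub_two_ofReal, ofReal_inv]
  have hne' : 1 + 2 / ((x : ℂ) ^ 2 - 2) ≠ 0 := by
    rw [one_add_two_div_sq_sub_two_ofReal]; exact_mod_cast hneg.ne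
  have hlog : ContinuousWithinAt (fun w : ℂ => log (1 + 2 / (w ^ 2 - 2))⁻¹)
      (Wdom ∩ {w | 0 < w.re ∧ w.re < Real.sqrt 2}) x := by
    refine continuousWithinAt_clog_of_im_nonneg (by fun_prop (disch := assumption))
      (by rw [hval, ofReal_re]; exact inv_lt_zero.mpr hneg)
      (by rw [hval, ofReal_im]) fun w ⟨⟨him, _⟩, hre, _⟩ => ?_
    rw [inv_im, im_one_add_two_div_sq_sub_two]
    refine div_nonneg (neg_nonneg.mpr (div_nonpos_of_nonpos_of_nonneg ?_ (normSq_nonneg _)))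
      (normSq_nonneg _)
    rcases him with him | him <;> nlinarith
  have hnear : {w : ℂ | 0 < w.re ∧ w.re < Real.sqrt 2} ∈ 𝓝 (x : ℂ) :=
    ((isOpen_lt continuous_const continuous_re).inter
      (isOpen_lt continuous_re continuous_const)).mem_nhds ⟨h0, (Real.lt_sqrt h0.le).mpr h2⟩
  exact (continuousWithinAt_inter hnear).mp <| ((hlog.neg).div_const 2).congr
    (fun w hw => Wfun_eq_neg_log_inv hw.1.1 hw.2.1 hw.2.2)
    (Wfun_eq_neg_log_inv (Or.inr rfl) h0 ((Real.lt_sqrt h0.le).mpr h2))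

theorem continuousOn_Wfun : ContinuousOn Wfun Wdom := by
  rintro z ⟨him | him, hm, h0, hp⟩
  · exact (differentiableOn_Wfun.differentiableAt
      (isOpen_lt continuous_const continuous_im |>.mem_nhds him)).continuousAt.continuousWithinAt
  obtain ⟨x, rfl⟩ : ∃ x : ℝ, z = x := ⟨z.re, Complex.ext rfl him⟩
  have hx0 : x ≠ 0 := by exact_mod_cast h0
  have hx2 : x ^ 2 ≠ 2 := by exact_mod_cast sub_ne_zero.mp (sq_sub_two_ne_zero hm hp)
  rcases hx2.lt_or_gt with hlt | hgt
  · rcases hx0.lt_or_gt with hneg | hpos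
    · exact continuousWithinAt_Wfun_ofReal_of_neg hneg hlt
    · exact continuousWithinAt_Wfun_ofReal_of_pos hpos hlt
  · exact (continuousAt_Wfun_ofReal_of_two_lt_sq hgt).continuousWithinAt

theorem Wfun_ofReal {x : ℝ} (hx : Real.sqrt 2 < |x|) :
    Wfun x = ((Real.log (1 + 2 / (x ^ 2 - 2)) / 2 : ℝ) : ℂ) := by
  have hx2 : 2 < x ^ 2 := by
    rwa [Real.sqrt_lt' ((Real.sqrt_nonneg 2).trans_lt hx), sq_abs] at hx
  rw [Wfun_eq_log fun h => hx2.not_gt ((Real.lt_sqrt h.2.1.le).mp h.2.2),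
    one_add_two_div_sq_sub_two_ofReal, ← ofReal_log (one_add_two_div_sq_sub_two_pos hx2).le]
  push_cast
  ring

/-- `W` is continuous on `(ℂ₊ ∪ ℝ) \ {−√2, 0, √2}`, holomorphic on the open
upper half-plane, and extends the real function `x ↦ (1/2)·ln(1 + 2/(x² − 2))`, `|x| > √2`. -/
theorem Wfun_continuousOn_analytic :
    ContinuousOn Wfun Wdom ∧
    DifferentiableOn ℂ Wfun {z : ℂ | 0 < z.im} ∧
    (∀ x : ℝ, Real.sqrt 2 < |x| →
      Wfun (x : ℂ) = ((Real.log (1 + 2 / (x ^ 2 - 2)) / 2 : ℝ) : ℂ)) :=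
  ⟨continuousOn_Wfun, differentiableOn_Wfun, fun _ => Wfun_ofReal⟩
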